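/- For every natural number n, applying the operator (X + s D_q)^n to the constant polynomial 1 yields (X + s D_q)^n 1 = Σ_{ℓ=0}^{⌊n/2⌋} W(n,ℓ) · s^ℓ x^{n-2ℓ}, where W(n,ℓ) = (1-q)^{-ℓ} · Σ_{i=0}^{ℓ} C(n,i) · (-1)^{ℓ-i} · q^{C(ℓ-i,2)} · λ_q(n-2i, ℓ-i), with C(n,i) the ordinary binomial coefficient and C(ℓ-i,2) = (ℓ-i)(ℓ-i-1)/2. -/

import Mathlib

/-!
Applying `X + s D_q` to a monomial gives `x^e ↦ x^(e+1) + s [e]_q x^(e-1)`, so the coefficient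
`c(n, ℓ)` of `s^ℓ x^(n-2ℓ)` in `(X + s D_q)^n 1` is determined by `c(n, 0) = 1` and
`c(n+1, ℓ+1) = c(n, ℓ+1) + [n-2ℓ]_q c(n, ℓ)`. It remains to show that `W` obeys this recurrence.
Splitting `C(n+1, i) = C(n, i) + C(n, i-1)` reduces it, summand by summand, to the three-term
identity
`q^c λ(a+2c+3, c+1) + (1 - q^(a+2)) λ(a+2c+2, c) = q^c λ(a+2c+2, c+1) + λ(a+2c+1, c)`,
a rational identity in `q` once `λ` is written with `q`-factorials. At the top index
`2ℓ + 1 = n` the closed forms `λ(2k, k) = 1 + q^k` and `λ(2k+1, k) = [2k+1]_q` are used instead.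
-/

noncomputable section

/-- The field `ℚ(q,s)` of rational functions in two indeterminates. -/
abbrev F : Type := FractionRing (MvPolynomial (Fin 2) ℚ)

/-- The indeterminate `q`. -/
def q : F := algebraMap (MvPolynomial (Fin 2) ℚ) F (MvPolynomial.X 0)

/-- The indeterminate `s`. -/
def s : F := algebraMap (MvPolynomial (Fin 2) ℚ) F (MvPolynomial.X 1)

/-- The q-integer `[n]_q = 1 + q + ⋯ + q^{n-1}`. -/
def qInt (n : ℕ) : F := ∑ i ∈ Finset.range n, q ^ i

/-- The q-factorial `[n]_q! = ∏_{k=1}^n [k]_q`. -/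
def qFact (n : ℕ) : F := ∏ k ∈ Finset.range n, qInt (k + 1)

/-- The q-binomial coefficient `[n choose k]_q = [n]_q!/([k]_q! [n-k]_q!)`. -/
def qBinom (n k : ℕ) : F := qFact n / (qFact k * qFact (n - k))

/-- The operator `X` of multiplication by `x` on `F[x]`. -/
def Xop : Module.End F (Polynomial F) := LinearMap.mulLeft F Polynomial.X

/-- Division by `x` (discarding the constant term), as a linear map. -/
def divXL : Polynomial F →ₗ[F] Polynomial F where
  toFun := Polynomial.divX
  map_add' p r := Polynomial.divX_add
  map_smul' a p := by
    ext n
    simp [Polynomial.coeff_divX, Polynomial.coeff_smul]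

/-- The q-derivative `D_q f(x) = (f(qx) - f(x))/((q-1)x)`; it is the F-linear
operator on `F[x]` determined by `D_q x^n = [n]_q x^{n-1}`. -/
def Dq : Module.End F (Polynomial F) :=
  (q - 1)⁻¹ •
    (divXL ∘ₗ
      ((Polynomial.aeval (Polynomial.C q * Polynomial.X)).toLinearMap - LinearMap.id))

/-- The polynomials `h_n(x,t) = Σ_j q^{j²} t^j [n]_q!/((1+q)⋯(1+q^j)·[j]_q!·[n-2j]_q!)
x^{n-2j}` (the parameter `t` will be specialized to `s` or `q²s`). -/
def h (t : F) (n : ℕ) : Polynomial F :=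
  ∑ j ∈ Finset.range (n / 2 + 1),
    Polynomial.C (q ^ (j ^ 2) * t ^ j * qFact n /
        ((∏ i ∈ Finset.range j, (1 + q ^ (i + 1))) * qFact j * qFact (n - 2 * j))) *
      Polynomial.X ^ (n - 2 * j)


/-- The q-Lucas coefficient `λ_q(n,k) = ([n]_q/[n-k]_q)·[n-k choose k]_q` for `n ≥ 1`,
with `λ_q(0,0) = 1`. -/
def lam (n k : ℕ) : F :=
  if n = 0 ∧ k = 0 then 1 else qInt n / qInt (n - k) * qBinom (n - k) k

/-- The q-Weyl coefficient
`W(n,ℓ) = (1-q)^{-ℓ} Σ_{i=0}^{ℓ} C(n,i) (-1)^{ℓ-i} q^{C(ℓ-i,2)} λ_q(n-2i, ℓ-i)`. -/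
def W (n ℓ : ℕ) : F :=
  (1 - q)⁻¹ ^ ℓ *
    ∑ i ∈ Finset.range (ℓ + 1),
      (n.choose i : F) * (-1) ^ (ℓ - i) * q ^ (ℓ - i).choose 2 * lam (n - 2 * i) (ℓ - i)

lemma choose_two_succ (c : ℕ) : (c + 1).choose 2 = c.choose 2 + c := by
  rw [Nat.choose_succ_succ', Nat.choose_one_right, add_comm]

lemma Finset.sum_range_succ_choose_mul {R : Type*} [Semiring R] (f : ℕ → R) (n ℓ : ℕ) :
    ∑ i ∈ Finset.range (ℓ + 1), ((n + 1).choose i : R) * f i =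
      ∑ i ∈ Finset.range (ℓ + 1), (n.choose i : R) * f i +
        ∑ i ∈ Finset.range ℓ, (n.choose i : R) * f (i + 1) := by
  rw [Finset.sum_range_succ', Finset.sum_range_succ' (fun i => (n.choose i : R) * f i)]
  simp only [Nat.choose_succ_succ', Nat.cast_add, add_mul, Finset.sum_add_distrib,
    Nat.choose_zero_right]
  abel

lemma q_pow_ne_one {n : ℕ} (hn : n ≠ 0) : q ^ n ≠ 1 := by
  intro h
  have hX : (MvPolynomial.X 0 : MvPolynomial (Fin 2) ℚ) ^ n = 1 :=
    IsFractionRing.injective (MvPolynomial (Fin 2) ℚ) F (by simpa [q] using h)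
  simpa [zero_pow hn] using congrArg MvPolynomial.constantCoeff hX

lemma q_ne_one : q ≠ 1 := by
  simpa using q_pow_ne_one one_ne_zero

lemma one_sub_q_ne_zero : (1 : F) - q ≠ 0 :=
  sub_ne_zero.2 q_ne_one.symm

lemma qInt_eq_div (n : ℕ) : qInt n = (1 - q ^ n) / (1 - q) :=
  eq_div_of_mul_eq one_sub_q_ne_zero (geom_sum_mul_neg q n)

lemma qInt_ne_zero {n : ℕ} (hn : n ≠ 0) : qInt n ≠ 0 := by
  rw [qInt_eq_div]
  exact div_ne_zero (sub_ne_zero.2 (q_pow_ne_one hn).symm) one_sub_q_ne_zero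

lemma qInt_zero : qInt 0 = 0 := Finset.sum_range_zero _

lemma qFact_succ (n : ℕ) : qFact (n + 1) = qFact n * qInt (n + 1) :=
  Finset.prod_range_succ _ _

lemma qFact_zero : qFact 0 = 1 := Finset.prod_range_zero _

lemma qFact_one : qFact 1 = 1 := by simp [qFact, qInt]

lemma qFact_ne_zero (n : ℕ) : qFact n ≠ 0 :=
  Finset.prod_ne_zero_iff.2 fun k _ => qInt_ne_zero k.succ_ne_zero

section Operator

open Polynomial

lemma Dq_X_pow (e : ℕ) : Dq (X ^ e) = C (qInt e) * X ^ (e - 1) := by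
  have hdiff : (C q * X) ^ e - X ^ e = C (q ^ e - 1) * X ^ e := by
    rw [mul_pow, ← C_pow, C_sub, C_1, sub_mul, one_mul]
  rw [Dq, LinearMap.smul_apply, LinearMap.comp_apply, LinearMap.sub_apply,
    AlgHom.toLinearMap_apply, LinearMap.id_apply, map_pow, aeval_X, hdiff]
  change (q - 1)⁻¹ • divX (C (q ^ e - 1) * X ^ e) = _
  rw [divX_C_mul, divX_X_pow, smul_eq_C_mul]
  rcases eq_or_ne e 0 with rfl | he
  · simp [qInt_zero]
  · rw [if_neg he, ← mul_assoc, ← C_mul, qInt, geom_sum_eq q_ne_one, div_eq_inv_mul]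

lemma Xop_add_smul_Dq_C_mul_X_pow (t a : F) (e : ℕ) :
    (Xop + t • Dq) (C a * X ^ e) = C a * X ^ (e + 1) + C (t * qInt e * a) * X ^ (e - 1) := by
  rw [LinearMap.add_apply, LinearMap.smul_apply, ← smul_eq_C_mul, map_smul Dq, Dq_X_pow]
  simp only [Xop, LinearMap.mulLeft_apply, smul_eq_C_mul, C_mul, pow_succ]
  ring

theorem Xop_add_smul_Dq_pow_apply_one (t : F) {c : ℕ → ℕ → F} (hc_zero : ∀ n, c n 0 = 1)
    (hc_lt : ∀ n ℓ, n < 2 * ℓ → c n ℓ = 0)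
    (hc_succ : ∀ n ℓ, c (n + 1) (ℓ + 1) = c n (ℓ + 1) + qInt (n - 2 * ℓ) * c n ℓ)
    {n N : ℕ} (hN : n < 2 * N) :
    ((Xop + t • Dq) ^ n) 1 = ∑ ℓ ∈ Finset.range N, C (c n ℓ * t ^ ℓ) * X ^ (n - 2 * ℓ) := by
  obtain ⟨M, rfl⟩ : ∃ M, N = M + 1 := ⟨N - 1, by omega⟩
  induction n with
  | zero =>
    rw [Finset.sum_range_succ', Finset.sum_eq_zero fun ℓ _ => by simp [hc_lt 0 (ℓ + 1) (by omega)]]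
    simp [hc_zero]
  | succ n ih =>
    have key : ∀ ℓ ∈ Finset.range M,
        C (c n (ℓ + 1) * t ^ (ℓ + 1)) * X ^ (n - 2 * (ℓ + 1) + 1) +
            C (t * qInt (n - 2 * ℓ) * (c n ℓ * t ^ ℓ)) * X ^ (n - 2 * ℓ - 1) =
          C (c (n + 1) (ℓ + 1) * t ^ (ℓ + 1)) * X ^ (n + 1 - 2 * (ℓ + 1)) := by
      intro ℓ _
      have hshift : C (c n (ℓ + 1) * t ^ (ℓ + 1)) * X ^ (n - 2 * (ℓ + 1) + 1) =
          C (c n (ℓ + 1) * t ^ (ℓ + 1)) * X ^ (n - 2 * ℓ - 1) := by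
        rcases le_or_gt (2 * (ℓ + 1)) n with h | h
        · rw [show n - 2 * (ℓ + 1) + 1 = n - 2 * ℓ - 1 by omega]
        · simp [hc_lt n (ℓ + 1) h]
      rw [hshift, hc_succ, show n + 1 - 2 * (ℓ + 1) = n - 2 * ℓ - 1 by omega]
      simp only [C_add, C_mul, C_pow]
      ring
    rw [pow_succ', Module.End.mul_apply, ih (by omega), map_sum]
    simp only [Xop_add_smul_Dq_C_mul_X_pow]
    rw [Finset.sum_add_distrib, Finset.sum_range_succ', Finset.sum_range_succ _ M,
      Finset.sum_range_succ' _ M, show n - 2 * M = 0 by omega, ← Finset.sum_congr rfl key,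
      Finset.sum_add_distrib]
    simp only [hc_zero, qInt_zero, Nat.sub_zero, mul_zero, zero_mul, map_zero, add_zero]
    ring

end Operator

lemma lam_zero (n : ℕ) : lam n 0 = 1 := by
  rcases eq_or_ne n 0 with rfl | hn
  · simp [lam]
  · simp [lam, qBinom, hn, qInt_ne_zero, qFact_ne_zero, qFact_zero]

lemma lam_add_two_mul {j k : ℕ} (h : j + k ≠ 0) :
    lam (j + 2 * k) k = qInt (j + 2 * k) * qFact (j + k - 1) / (qFact k * qFact j) := by
  obtain ⟨m, hm⟩ := Nat.exists_eq_succ_of_ne_zero h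
  rw [lam, if_neg (by omega), qBinom, show j + 2 * k - k = m + 1 by omega,
    show m + 1 - k = j by omega, show j + k - 1 = m by omega, qFact_succ]
  have := qInt_ne_zero m.succ_ne_zero
  have := qFact_ne_zero k
  have := qFact_ne_zero j
  field_simp

lemma lam_two_mul_self {k : ℕ} (hk : k ≠ 0) : lam (2 * k) k = 1 + q ^ k := by
  obtain ⟨m, rfl⟩ := Nat.exists_eq_succ_of_ne_zero hk
  have h := lam_add_two_mul (j := 0) (k := m + 1) (by omega)
  rw [zero_add, show 0 + (m + 1) - 1 = m by omega, qFact_succ, qFact_zero, qInt_eq_div, qInt_eq_div] at h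
  rw [h]
  have := qFact_ne_zero m
  have := sub_ne_zero.2 (q_pow_ne_one m.succ_ne_zero).symm
  have := one_sub_q_ne_zero
  field_simp
  ring

lemma lam_two_mul_add_one_self (k : ℕ) : lam (2 * k + 1) k = qInt (2 * k + 1) := by
  have h := lam_add_two_mul (j := 1) (k := k) (by omega)
  rw [add_comm 1, show 1 + k - 1 = k by omega] at h
  rw [h, qFact_one, mul_one, mul_div_assoc, div_self (qFact_ne_zero k), mul_one]

lemma lam_recurrence (a c : ℕ) :
    q ^ c * lam (a + 2 * c + 3) (c + 1) + (1 - q ^ (a + 2)) * lam (a + 2 * c + 2) c =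
      q ^ c * lam (a + 2 * c + 2) (c + 1) + lam (a + 2 * c + 1) c := by
  have e1 := lam_add_two_mul (j := a + 1) (k := c + 1) (by omega)
  have e2 := lam_add_two_mul (j := a) (k := c + 1) (by omega)
  have e3 := lam_add_two_mul (j := a + 2) (k := c) (by omega)
  have e4 := lam_add_two_mul (j := a + 1) (k := c) (by omega)
  rw [show a + 1 + 2 * (c + 1) = a + 2 * c + 3 by ring,
    show a + 1 + (c + 1) - 1 = a + c + 1 by omega] at e1
  rw [show a + 2 * (c + 1) = a + 2 * c + 2 by ring, show a + (c + 1) - 1 = a + c by omega] at e2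
  rw [show a + 2 + 2 * c = a + 2 * c + 2 by ring, show a + 2 + c - 1 = a + c + 1 by omega,
    show a + 2 = a + 1 + 1 by rfl] at e3
  rw [show a + 1 + 2 * c = a + 2 * c + 1 by ring, show a + 1 + c - 1 = a + c by omega] at e4
  rw [e1, e2, e3, e4, qFact_succ (a + c), qFact_succ c, qFact_succ (a + 1), qFact_succ a]
  have := qFact_ne_zero a
  have := qFact_ne_zero c
  have := qInt_ne_zero (n := a + 1) (by omega)
  have := qInt_ne_zero (n := a + 1 + 1) (by omega)
  have := qInt_ne_zero (n := c + 1) (by omega)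
  field_simp
  simp only [qInt_eq_div]
  have := one_sub_q_ne_zero
  field_simp
  ring

def Wterm (N c : ℕ) : F := (-1) ^ c * q ^ c.choose 2 * lam N c

def Wsum (n ℓ : ℕ) : F :=
  ∑ i ∈ Finset.range (ℓ + 1), (n.choose i : F) * Wterm (n - 2 * i) (ℓ - i)

lemma W_eq_mul_Wsum (n ℓ : ℕ) : W n ℓ = (1 - q)⁻¹ ^ ℓ * Wsum n ℓ := by
  simp only [W, Wsum, Wterm, mul_assoc]

lemma Wterm_zero (N : ℕ) : Wterm N 0 = 1 := by
  simp [Wterm, lam_zero]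

lemma Wterm_recurrence {N c : ℕ} (h : 2 * c + 2 ≤ N) :
    Wterm (N + 1) (c + 1) + Wterm (N - 1) c =
      Wterm N (c + 1) + (1 - q ^ (N - 2 * c)) * Wterm N c := by
  obtain ⟨a, rfl⟩ : ∃ a, N = a + 2 * c + 2 := ⟨N - 2 * c - 2, by omega⟩
  rw [show a + 2 * c + 2 + 1 = a + 2 * c + 3 by ring, show a + 2 * c + 2 - 1 = a + 2 * c + 1 by omega,
    show a + 2 * c + 2 - 2 * c = a + 2 by omega]
  simp only [Wterm, choose_two_succ, pow_add, pow_one]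
  linear_combination (-(-1) ^ c * q ^ c.choose 2) * lam_recurrence a c

lemma Wterm_recurrence_boundary {k : ℕ} (hk : k ≠ 0) :
    Wterm (2 * k + 2) (k + 1) + Wterm (2 * k) k = (1 - q) * Wterm (2 * k + 1) k := by
  rw [Wterm, Wterm, Wterm, show 2 * k + 2 = 2 * (k + 1) by ring, lam_two_mul_self (by omega),
    lam_two_mul_self hk, lam_two_mul_add_one_self, qInt_eq_div, choose_two_succ]
  have := one_sub_q_ne_zero
  field_simp
  ring

lemma Wsum_succ_succ {n ℓ : ℕ} (h : 2 * ℓ + 2 ≤ n) :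
    Wsum (n + 1) (ℓ + 1) = Wsum n (ℓ + 1) + (1 - q ^ (n - 2 * ℓ)) * Wsum n ℓ := by
  have key : ∀ i ∈ Finset.range (ℓ + 1),
      (n.choose i : F) * Wterm (n + 1 - 2 * i) (ℓ + 1 - i) +
          (n.choose i : F) * Wterm (n + 1 - 2 * (i + 1)) (ℓ + 1 - (i + 1)) =
        (n.choose i : F) * Wterm (n - 2 * i) (ℓ + 1 - i) +
          (1 - q ^ (n - 2 * ℓ)) * ((n.choose i : F) * Wterm (n - 2 * i) (ℓ - i)) := by
    intro i hi
    have hi : i ≤ ℓ := Finset.mem_range_succ_iff.1 hi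
    have hrec := Wterm_recurrence (N := n - 2 * i) (c := ℓ - i) (by omega)
    rw [show n - 2 * i + 1 = n + 1 - 2 * i by omega, show ℓ - i + 1 = ℓ + 1 - i by omega,
      show n - 2 * i - 1 = n + 1 - 2 * (i + 1) by omega, show ℓ - i = ℓ + 1 - (i + 1) by omega,
      show n - 2 * i - 2 * (ℓ + 1 - (i + 1)) = n - 2 * ℓ by omega] at hrec
    rw [show ℓ - i = ℓ + 1 - (i + 1) by omega]
    linear_combination (n.choose i : F) * hrec
  rw [Wsum, Finset.sum_range_succ_choose_mul (fun i => Wterm (n + 1 - 2 * i) (ℓ + 1 - i)),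
    Wsum, Wsum, Finset.mul_sum]
  simp only [Finset.sum_range_succ _ (ℓ + 1), Nat.sub_self, Wterm_zero]
  linear_combination Finset.sum_add_distrib.symm.trans
    ((Finset.sum_congr rfl key).trans Finset.sum_add_distrib)

lemma Wsum_two_mul_add_two (m : ℕ) : Wsum (2 * m + 2) (m + 1) = (1 - q) * Wsum (2 * m + 1) m := by
  have key : ∀ i ∈ Finset.range m,
      ((2 * m + 1).choose i : F) * Wterm (2 * m + 1 + 1 - 2 * i) (m + 1 - i) +
          ((2 * m + 1).choose i : F) * Wterm (2 * m + 1 + 1 - 2 * (i + 1)) (m + 1 - (i + 1)) =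
        (1 - q) * (((2 * m + 1).choose i : F) * Wterm (2 * m + 1 - 2 * i) (m - i)) := by
    intro i hi
    have hi : i < m := Finset.mem_range.1 hi
    have hrec := Wterm_recurrence_boundary (k := m - i) (by omega)
    rw [show 2 * (m - i) + 2 = 2 * m + 1 + 1 - 2 * i by omega, show m - i + 1 = m + 1 - i by omega,
      show 2 * (m - i) + 1 = 2 * m + 1 - 2 * i by omega,
      show 2 * (m - i) = 2 * m + 1 + 1 - 2 * (i + 1) by omega] at hrec
    rw [show m + 1 - (i + 1) = m - i by omega]
    linear_combination ((2 * m + 1).choose i : F) * hrec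
  have hchoose : (2 * m + 1).choose (m + 1) = (2 * m + 1).choose m := by
    rw [← Nat.choose_symm (by omega), show 2 * m + 1 - (m + 1) = m by omega]
  have hlam : lam 2 1 = 1 + q := by simpa using lam_two_mul_self one_ne_zero
  rw [Wsum, show 2 * m + 2 = 2 * m + 1 + 1 by ring,
    Finset.sum_range_succ_choose_mul (fun i => Wterm (2 * m + 1 + 1 - 2 * i) (m + 1 - i)),
    Wsum, Finset.mul_sum]
  simp only [Finset.sum_range_succ _ m, Finset.sum_range_succ _ (m + 1)]
  rw [show 2 * m + 1 + 1 - 2 * m = 2 by omega, show 2 * m + 1 - 2 * m = 1 by omega]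
  simp only [Nat.sub_self, Nat.add_sub_cancel_left, Wterm_zero, hchoose]
  rw [Wterm, hlam, show Nat.choose 1 2 = 0 from rfl]
  linear_combination Finset.sum_add_distrib.symm.trans (Finset.sum_congr rfl key)

lemma W_zero_right (n : ℕ) : W n 0 = 1 := by
  simp [W_eq_mul_Wsum, Wsum, Wterm_zero]

lemma W_succ_succ {n ℓ : ℕ} (h : 2 * ℓ + 2 ≤ n) :
    W (n + 1) (ℓ + 1) = W n (ℓ + 1) + qInt (n - 2 * ℓ) * W n ℓ := by
  rw [W_eq_mul_Wsum, W_eq_mul_Wsum, W_eq_mul_Wsum, Wsum_succ_succ h, qInt_eq_div, div_eq_mul_inv,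
    pow_succ]
  ring

lemma W_two_mul_add_two (m : ℕ) : W (2 * m + 2) (m + 1) = W (2 * m + 1) m := by
  rw [W_eq_mul_Wsum, W_eq_mul_Wsum, Wsum_two_mul_add_two, pow_succ]
  linear_combination ((1 - q)⁻¹ ^ m * Wsum (2 * m + 1) m) * inv_mul_cancel₀ one_sub_q_ne_zero

/-- `W` extended by zero beyond `ℓ = ⌊n/2⌋`, where its defining formula gives junk values. -/
def Wtrunc (n ℓ : ℕ) : F := if 2 * ℓ ≤ n then W n ℓ else 0

lemma Wtrunc_zero_right (n : ℕ) : Wtrunc n 0 = 1 := by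
  simp [Wtrunc, W_zero_right]

lemma Wtrunc_of_lt {n ℓ : ℕ} (h : n < 2 * ℓ) : Wtrunc n ℓ = 0 :=
  if_neg (by omega)

lemma Wtrunc_succ_succ (n ℓ : ℕ) :
    Wtrunc (n + 1) (ℓ + 1) = Wtrunc n (ℓ + 1) + qInt (n - 2 * ℓ) * Wtrunc n ℓ := by
  rcases le_or_gt (2 * ℓ + 2) n with h | h
  · simp only [Wtrunc, if_pos (by omega : 2 * (ℓ + 1) ≤ n + 1), if_pos (by omega : 2 * (ℓ + 1) ≤ n),
      if_pos (by omega : 2 * ℓ ≤ n), W_succ_succ h]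
  rcases eq_or_ne n (2 * ℓ + 1) with rfl | hn
  · simp only [Wtrunc, if_pos (by omega : 2 * (ℓ + 1) ≤ 2 * ℓ + 1 + 1),
      if_neg (by omega : ¬2 * (ℓ + 1) ≤ 2 * ℓ + 1), if_pos (by omega : 2 * ℓ ≤ 2 * ℓ + 1),
      show 2 * ℓ + 1 - 2 * ℓ = 1 by omega, W_two_mul_add_two]
    simp [qInt]
  · rw [Wtrunc_of_lt (by omega), Wtrunc_of_lt (by omega), show n - 2 * ℓ = 0 by omega]
    simp [qInt_zero]

theorem qHermite_apply_one (n : ℕ) :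
    ((Xop + s • Dq) ^ n) (1 : Polynomial F) =
      ∑ ℓ ∈ Finset.range (n / 2 + 1),
        Polynomial.C (W n ℓ * s ^ ℓ) * Polynomial.X ^ (n - 2 * ℓ) := by
  rw [Xop_add_smul_Dq_pow_apply_one s Wtrunc_zero_right (fun _ _ => Wtrunc_of_lt) Wtrunc_succ_succ
    (N := n / 2 + 1) (by omega)]
  refine Finset.sum_congr rfl fun ℓ hℓ => ?_
  rw [Wtrunc, if_pos (by have := Finset.mem_range.1 hℓ; omega)]

end
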